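/- arXiv:1804.01709 — 4 statements merged into one kernel-verified Lean document; each statement's English description precedes it below -/
import Mathlib

section
/- The function P(ξ) = ξ − η(ξ) is monotone nondecreasing on ℝ. -/
open MeasureTheory Real

/-- The soft-thresholding function induced by the max-scheduling policy; at
`ξ = 0` both integrals vanish and Lean's `0/0 = 0` gives `eta σ ρ 0 = 0`. -/
noncomputable def eta (σ ρ : ℝ) (ξ : ℝ) : ℝ :=
  (∫ τ in (-|ξ|)..|ξ|, τ * Real.exp (-(τ - ρ * ξ) ^ 2 / (2 * σ ^ 2 * (1 - ρ ^ 2)))) /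
  (∫ τ in (-|ξ|)..|ξ|, Real.exp (-(τ - ρ * ξ) ^ 2 / (2 * σ ^ 2 * (1 - ρ ^ 2))))

/-! `η ξ` is the mean of a Gaussian of location `ρ ξ` truncated to `[-ξ, ξ]`. For `0 < x ≤ y`,
translating by `y - x` turns `η y - (y - x)` into the mean of a Gaussian of location
`ρ y - (y - x) ≤ ρ x` truncated to `[x - 2y, x]`. Raising the location to `ρ x` increases the mean
(the Gaussian family has monotone likelihood ratio, and Chebyshev's inequality applies), and so
does shrinking the window to `[-x, x]`; hence `η y - η x ≤ y - x`. Since `η` is odd, this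
monotonicity of `ξ - η ξ` on `[0, ∞)` extends to `ℝ`. -/

noncomputable def intervalMean (f : ℝ → ℝ) (a b : ℝ) : ℝ :=
  (∫ t in a..b, t * f t) / ∫ t in a..b, f t

section IntervalMean

variable {f : ℝ → ℝ} {a b : ℝ}

theorem integral_id_sub_const_mul (hf : Continuous f) (m : ℝ) :
    ∫ t in a..b, (t - m) * f t = (∫ t in a..b, t * f t) - m * ∫ t in a..b, f t := by
  have hg : Continuous fun t => t * f t := continuous_id.mul hf
  simp_rw [sub_mul]
  rw [intervalIntegral.integral_sub (hg.intervalIntegrable _ _)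
    ((hf.const_mul m).intervalIntegrable _ _), intervalIntegral.integral_const_mul]

theorem integral_id_mul_le_mul_integral (hf0 : ∀ t, 0 ≤ f t) (hf : Continuous f)
    (hab : a ≤ b) : ∫ t in a..b, t * f t ≤ b * ∫ t in a..b, f t := by
  rw [← intervalIntegral.integral_const_mul]
  exact intervalIntegral.integral_mono_on hab ((continuous_id.mul hf).intervalIntegrable _ _)
    ((hf.const_mul b).intervalIntegrable _ _) fun t ht => mul_le_mul_of_nonneg_right ht.2 (hf0 t)

theorem mul_integral_le_integral_id_mul (hf0 : ∀ t, 0 ≤ f t) (hf : Continuous f)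
    (hab : a ≤ b) : a * ∫ t in a..b, f t ≤ ∫ t in a..b, t * f t := by
  rw [← intervalIntegral.integral_const_mul]
  exact intervalIntegral.integral_mono_on hab ((hf.const_mul a).intervalIntegrable _ _)
    ((continuous_id.mul hf).intervalIntegrable _ _) fun t ht =>
      mul_le_mul_of_nonneg_right ht.1 (hf0 t)

theorem integral_pos_of_continuous_of_pos (hf0 : ∀ t, 0 < f t) (hf : Continuous f)
    (hab : a < b) : 0 < ∫ t in a..b, f t :=
  intervalIntegral.intervalIntegral_pos_of_pos (hf.intervalIntegrable _ _) hf0 hab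

theorem intervalMean_le_right (hf0 : ∀ t, 0 < f t) (hf : Continuous f) (hab : a < b) :
    intervalMean f a b ≤ b :=
  (div_le_iff₀ (integral_pos_of_continuous_of_pos hf0 hf hab)).2
    (integral_id_mul_le_mul_integral (fun t => (hf0 t).le) hf hab.le)

theorem intervalMean_mono_left (hf0 : ∀ t, 0 < f t) (hf : Continuous f) {a' : ℝ} (ha : a' ≤ a)
    (hab : a < b) : intervalMean f a' b ≤ intervalMean f a b := by
  have hf0' : ∀ t, 0 ≤ f t := fun t => (hf0 t).le
  have hg : Continuous fun t => t * f t := continuous_id.mul hf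
  have hZ₁ : 0 ≤ ∫ t in a'..a, f t := intervalIntegral.integral_nonneg ha fun t _ => hf0' t
  have hZ₂ : 0 < ∫ t in a..b, f t := integral_pos_of_continuous_of_pos hf0 hf hab
  have hN₁ := integral_id_mul_le_mul_integral hf0' hf ha
  have hN₂ := mul_integral_le_integral_id_mul hf0' hf hab.le
  unfold intervalMean
  rw [← intervalIntegral.integral_add_adjacent_intervals (hf.intervalIntegrable a' a)
      (hf.intervalIntegrable a b),
    ← intervalIntegral.integral_add_adjacent_intervals (hg.intervalIntegrable a' a)
      (hg.intervalIntegrable a b), div_le_div_iff₀ (by linarith) hZ₂]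
  nlinarith

theorem intervalMean_comp_add_right (hf : Continuous f) (hZ : ∫ t in a..b, f t ≠ 0) (δ : ℝ) :
    intervalMean (fun t => f (t + δ)) (a - δ) (b - δ) = intervalMean f a b - δ := by
  have hN : ∫ t in (a - δ)..(b - δ), t * f (t + δ) = ∫ t in a..b, (t - δ) * f t := by
    simpa using intervalIntegral.integral_comp_add_right (fun t => (t - δ) * f t) δ
      (a := a - δ) (b := b - δ)
  have hD : ∫ t in (a - δ)..(b - δ), f (t + δ) = ∫ t in a..b, f t := by simp
  rw [intervalMean, intervalMean, hN, hD, integral_id_sub_const_mul hf, sub_div,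
    mul_div_cancel_right₀ _ hZ]

theorem intervalMean_comp_neg :
    intervalMean (fun t => f (-t)) (-b) (-a) = -intervalMean f a b := by
  have hN : ∫ t in (-b)..(-a), t * f (-t) = -∫ t in a..b, t * f t := by
    simpa using intervalIntegral.integral_comp_neg (fun t => -(t * f t)) (a := -b) (b := -a)
  have hD : ∫ t in (-b)..(-a), f (-t) = ∫ t in a..b, f t := by simp
  rw [intervalMean, intervalMean, hN, hD, neg_div]

/-- Chebyshev's integral inequality in one-integral form: with `m` the mean of `f`,
`(t - m) (h t - h m) ≥ 0` pointwise and `∫ (t - m) f = 0`. -/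
theorem intervalMean_le_intervalMean_mul {h : ℝ → ℝ} (hf0 : ∀ t, 0 < f t) (hf : Continuous f)
    (hh0 : ∀ t, 0 < h t) (hh : Continuous h) (hmono : Monotone h) (hab : a < b) :
    intervalMean f a b ≤ intervalMean (fun t => h t * f t) a b := by
  set m := intervalMean f a b
  have hhf : Continuous fun t => h t * f t := hh.mul hf
  have hZ := integral_pos_of_continuous_of_pos hf0 hf hab
  have hZh := integral_pos_of_continuous_of_pos (fun t => mul_pos (hh0 t) (hf0 t)) hhf hab
  have hcentered : ∫ t in a..b, (t - m) * f t = 0 := by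
    rw [integral_id_sub_const_mul hf, sub_eq_zero, eq_comm]
    exact div_mul_cancel₀ _ hZ.ne'
  have hpos : 0 ≤ ∫ t in a..b, (t - m) * (h t - h m) * f t := by
    refine intervalIntegral.integral_nonneg hab.le fun t _ => mul_nonneg ?_ (hf0 t).le
    rcases le_total t m with htm | htm
    · exact mul_nonneg_of_nonpos_of_nonpos (sub_nonpos.2 htm) (sub_nonpos.2 (hmono htm))
    · exact mul_nonneg (sub_nonneg.2 htm) (sub_nonneg.2 (hmono htm))
  have hsplit : ∫ t in a..b, (t - m) * (h t - h m) * f t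
      = (∫ t in a..b, (t - m) * (h t * f t)) - h m * ∫ t in a..b, (t - m) * f t := by
    rw [← intervalIntegral.integral_const_mul, ← intervalIntegral.integral_sub]
    · congr 1; ext t; ring
    · exact ((continuous_id.sub continuous_const).mul hhf).intervalIntegrable _ _
    · exact (((continuous_id.sub continuous_const).mul hf).const_mul _).intervalIntegrable _ _
  rw [hsplit, hcentered, mul_zero, sub_zero, integral_id_sub_const_mul hhf, sub_nonneg] at hpos
  exact (le_div_iff₀ hZh).2 hpos

end IntervalMean

noncomputable def gaussWeight (c μ t : ℝ) : ℝ := exp (-(t - μ) ^ 2 / c)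

@[fun_prop]
theorem continuous_gaussWeight (c μ : ℝ) : Continuous (gaussWeight c μ) := by
  unfold gaussWeight; fun_prop

theorem gaussWeight_pos (c μ t : ℝ) : 0 < gaussWeight c μ t := exp_pos _

theorem gaussWeight_comp_add_right (c μ δ : ℝ) :
    (fun t => gaussWeight c μ (t + δ)) = gaussWeight c (μ - δ) := by
  ext t; unfold gaussWeight; ring_nf

theorem gaussWeight_neg (c μ : ℝ) : gaussWeight c (-μ) = fun t => gaussWeight c μ (-t) := by
  ext t; unfold gaussWeight; ring_nf

theorem gaussWeight_eq_exp_mul (c μ₁ μ₂ t : ℝ) : gaussWeight c μ₂ t =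
    exp ((2 * (μ₂ - μ₁) * t + (μ₁ ^ 2 - μ₂ ^ 2)) / c) * gaussWeight c μ₁ t := by
  unfold gaussWeight; rw [← exp_add]; ring_nf

theorem monotone_intervalMean_gaussWeight {c : ℝ} (hc : 0 ≤ c) {a b : ℝ} (hab : a < b) :
    Monotone fun μ => intervalMean (gaussWeight c μ) a b := by
  intro μ₁ μ₂ hμ
  dsimp only
  rw [show gaussWeight c μ₂ = _ from funext (gaussWeight_eq_exp_mul c μ₁ μ₂)]
  refine intervalMean_le_intervalMean_mul (gaussWeight_pos c μ₁) (continuous_gaussWeight c μ₁)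
    (fun t => exp_pos _) (by fun_prop) (fun s t hst => exp_le_exp.2 ?_) hab
  gcongr

theorem eta_eq_intervalMean (σ ρ ξ : ℝ) :
    eta σ ρ ξ = intervalMean (gaussWeight (2 * σ ^ 2 * (1 - ρ ^ 2)) (ρ * ξ)) (-|ξ|) |ξ| := rfl

@[simp]
theorem eta_zero (σ ρ : ℝ) : eta σ ρ 0 = 0 := by simp [eta]

theorem eta_neg (σ ρ ξ : ℝ) : eta σ ρ (-ξ) = -eta σ ρ ξ := by
  rw [eta_eq_intervalMean, eta_eq_intervalMean, abs_neg, mul_neg, gaussWeight_neg,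
    ← intervalMean_comp_neg, neg_neg]

theorem eta_le_self (σ ρ : ℝ) {ξ : ℝ} (hξ : 0 ≤ ξ) : eta σ ρ ξ ≤ ξ := by
  rcases hξ.eq_or_lt with rfl | hξ
  · simp
  rw [eta_eq_intervalMean, abs_of_pos hξ]
  exact intervalMean_le_right (gaussWeight_pos _ _) (continuous_gaussWeight _ _) (by linarith)

theorem eta_sub_le (σ : ℝ) {ρ : ℝ} (hρ : |ρ| ≤ 1) {x y : ℝ} (hx : 0 < x) (hxy : x ≤ y) :
    eta σ ρ y - (y - x) ≤ eta σ ρ x := by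
  set c := 2 * σ ^ 2 * (1 - ρ ^ 2)
  have hc : 0 ≤ c := by have := (sq_le_one_iff_abs_le_one ρ).2 hρ; positivity
  have hZ : ∫ t in (-y)..y, gaussWeight c (ρ * y) t ≠ 0 :=
    (integral_pos_of_continuous_of_pos (gaussWeight_pos _ _) (continuous_gaussWeight _ _)
      (by linarith)).ne'
  calc eta σ ρ y - (y - x)
      = intervalMean (gaussWeight c (ρ * y - (y - x))) (-y - (y - x)) x := by
        rw [eta_eq_intervalMean, abs_of_pos (hx.trans_le hxy), ← intervalMean_comp_add_right
          (continuous_gaussWeight _ _) hZ, gaussWeight_comp_add_right, sub_sub_cancel]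
    _ ≤ intervalMean (gaussWeight c (ρ * x)) (-y - (y - x)) x :=
        monotone_intervalMean_gaussWeight hc (by linarith) (by nlinarith [le_of_abs_le hρ])
    _ ≤ intervalMean (gaussWeight c (ρ * x)) (-x) x :=
        intervalMean_mono_left (gaussWeight_pos _ _) (continuous_gaussWeight _ _) (by linarith)
          (by linarith)
    _ = eta σ ρ x := by rw [eta_eq_intervalMean, abs_of_pos hx]

theorem P_monotone_general (σ ρ : ℝ) (hρ0 : 0 ≤ ρ) (hρ1 : ρ < 1) :
    Monotone (fun ξ : ℝ => ξ - eta σ ρ ξ) := by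
  have hρ : |ρ| ≤ 1 := abs_le.2 ⟨by linarith, hρ1.le⟩
  refine monotone_of_odd_of_monotoneOn_nonneg (fun ξ => by rw [eta_neg]; ring) ?_
  intro x hx y _ hxy
  rcases (Set.mem_Ici.1 hx).eq_or_lt with rfl | hx
  · simpa using eta_le_self σ ρ hxy
  · linarith [eta_sub_le σ hρ hx hxy]

/-- `P(ξ) = ξ − η(ξ)` is monotone nondecreasing on `ℝ`. -/
theorem P_monotone (σ ρ : ℝ) (hσ : 0 < σ) (hρ0 : 0 ≤ ρ) (hρ1 : ρ < 1) :
    Monotone (fun ξ : ℝ => ξ - eta σ ρ ξ) :=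
  P_monotone_general σ ρ hρ0 hρ1
end

section
/- Let η : ℝ → ℝ be odd, and suppose P(ξ) = ξ − η(ξ) and T(ξ) = ξ + η(ξ) are both monotone nondecreasing with P(0) = T(0) = 0. Then for all x₁, x₂ ∈ ℝ: if |x₁| ≥ |x₂| then (x₂ − η(x₁))² ≤ (x₁ − η(x₂))², and if |x₂| ≥ |x₁| then (x₁ − η(x₂))² ≤ (x₂ − η(x₁))². -/
/-! For odd `η`, the difference of the two squared errors factors as
`(x₁ - η x₂)² - (x₂ - η x₁)² = (T x₁ - T x₂) (P x₁ - P (-x₂))`.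
When `|x₂| ≤ |x₁|`, both `x₂` and `-x₂` lie on the same side of `x₁`, so by monotonicity
of `T` and `P` the two factors have the same sign. -/

theorem sq_sub_sq_eq_mul_of_odd {η : ℝ → ℝ} (hodd : ∀ ξ : ℝ, η (-ξ) = -η ξ) (a b : ℝ) :
    (a - η b) ^ 2 - (b - η a) ^ 2 = ((a + η a) - (b + η b)) * ((a - η a) - (-b - η (-b))) := by
  rw [hodd]
  ring

theorem sq_sub_le_sq_sub_of_abs_le {η : ℝ → ℝ} (hodd : ∀ ξ : ℝ, η (-ξ) = -η ξ)
    (hP : Monotone (fun ξ : ℝ => ξ - η ξ)) (hT : Monotone (fun ξ : ℝ => ξ + η ξ))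
    {a b : ℝ} (hab : |b| ≤ |a|) : (b - η a) ^ 2 ≤ (a - η b) ^ 2 := by
  rw [← sub_nonneg, sq_sub_sq_eq_mul_of_odd hodd]
  rcases le_abs.mp hab with ha | ha
  · have hTab : b + η b ≤ a + η a := hT ((le_abs_self b).trans ha)
    have hPab : -b - η (-b) ≤ a - η a := hP ((neg_le_abs b).trans ha)
    exact mul_nonneg (sub_nonneg.mpr hTab) (sub_nonneg.mpr hPab)
  · have hTab : a + η a ≤ b + η b := hT (by linarith [neg_le_abs b])
    have hPab : a - η a ≤ -b - η (-b) := hP (by linarith [le_abs_self b])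
    exact mul_nonneg_of_nonpos_of_nonpos (sub_nonpos.mpr hTab) (sub_nonpos.mpr hPab)

theorem max_scheduling_optimal_general (η : ℝ → ℝ) (hodd : ∀ ξ : ℝ, η (-ξ) = -η ξ)
    (hP : Monotone (fun ξ : ℝ => ξ - η ξ)) (hT : Monotone (fun ξ : ℝ => ξ + η ξ)) :
    ∀ x₁ x₂ : ℝ,
      (|x₁| ≥ |x₂| → (x₂ - η x₁) ^ 2 ≤ (x₁ - η x₂) ^ 2) ∧
      (|x₂| ≥ |x₁| → (x₁ - η x₂) ^ 2 ≤ (x₂ - η x₁) ^ 2) := fun _ _ =>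
  ⟨sq_sub_le_sq_sub_of_abs_le hodd hP hT, sq_sub_le_sq_sub_of_abs_le hodd hP hT⟩

/-- If `η` is odd and `P(ξ) = ξ − η(ξ)`, `T(ξ) = ξ + η(ξ)` are monotone
nondecreasing with `P(0) = T(0) = 0`, then the max-magnitude rule orders the
two squared estimation errors. -/
theorem max_scheduling_optimal (η : ℝ → ℝ) (hodd : ∀ ξ : ℝ, η (-ξ) = -η ξ)
    (hP : Monotone (fun ξ : ℝ => ξ - η ξ)) (hT : Monotone (fun ξ : ℝ => ξ + η ξ))
    (hP0 : (0 : ℝ) - η 0 = 0) (hT0 : (0 : ℝ) + η 0 = 0) :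
    ∀ x₁ x₂ : ℝ,
      (|x₁| ≥ |x₂| → (x₂ - η x₁) ^ 2 ≤ (x₁ - η x₂) ^ 2) ∧
      (|x₂| ≥ |x₁| → (x₁ - η x₂) ^ 2 ≤ (x₂ - η x₁) ^ 2) :=
  max_scheduling_optimal_general η hodd hP hT
end

section
/- Let φ be the N(0,σ²) density. For α > 0 and t ∈ [0, 2α], the function W(α, t) = 1 − (∫_{α−t}^{α} φ)/(∫_{−α}^{α} φ) is monotone nondecreasing in α (for α ≥ t/2). -/
/-!
The window `[α - t, α]` and the symmetric interval `[-α, α]` are integrated against a nonnegative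
density that decreases in `|x|`. Once `α ≥ t/2`, sliding the window from `α₁` to `α₂` trades
`[α₁ - t, α₂ - t]` for `[α₁, α₂]`, whose points are farther from the origin, so the numerator
decreases while the denominator increases.
-/

open MeasureTheory Real Set

theorem div_le_div_of_le_of_le_of_le {n₁ n₂ d₁ d₂ : ℝ} (hn₁ : 0 ≤ n₁) (hn : n₂ ≤ n₁)
    (hnd : n₁ ≤ d₁) (hd : d₁ ≤ d₂) : n₂ / d₂ ≤ n₁ / d₁ := by
  rcases (hn₁.trans hnd).eq_or_lt with hd₁ | hd₁
  · rw [← hd₁, div_zero]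
    exact div_nonpos_of_nonpos_of_nonneg (by linarith) (by linarith)
  · exact div_le_div₀ hn₁ hn hd₁ hd

section AbsAntitone

variable {f : ℝ → ℝ}

theorem antitoneOn_integral_window (hf : Continuous f) (hmono : ∀ x y, |x| ≤ |y| → f y ≤ f x)
    {t : ℝ} (ht : 0 ≤ t) : AntitoneOn (fun a => ∫ x in (a - t)..a, f x) (Ici (t / 2)) := by
  intro a ha b _ hab
  have hint : ∀ c d : ℝ, IntervalIntegrable f volume c d := hf.intervalIntegrable
  have hshift : ∫ x in a..b, f x ≤ ∫ x in (a - t)..(b - t), f x := by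
    rw [← intervalIntegral.integral_comp_sub_right]
    refine intervalIntegral.integral_mono_on hab (hint _ _)
      ((hf.comp (continuous_sub_right t)).intervalIntegrable _ _) fun x hx => hmono _ _ ?_
    have : t / 2 ≤ x := le_trans ha hx.1
    exact abs_le_abs (by linarith) (by linarith)
  have hsplit₁ := intervalIntegral.integral_add_adjacent_intervals (hint (a - t) a) (hint a b)
  have hsplit₂ := intervalIntegral.integral_add_adjacent_intervals (hint (a - t) (b - t))
    (hint (b - t) b)
  linarith

theorem monotoneOn_integral_symm (hf : Continuous f) (hf₀ : ∀ x, 0 ≤ f x) :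
    MonotoneOn (fun a => ∫ x in (-a)..a, f x) (Ici 0) := fun a ha b _ hab =>
  intervalIntegral.integral_mono_interval (by linarith) (by linarith [mem_Ici.mp ha]) hab
    (Filter.Eventually.of_forall fun x => hf₀ x) (hf.intervalIntegrable _ _)

theorem integral_window_le_integral_symm (hf : Continuous f) (hf₀ : ∀ x, 0 ≤ f x) {t a : ℝ}
    (ht : 0 ≤ t) (ha : t / 2 ≤ a) : ∫ x in (a - t)..a, f x ≤ ∫ x in (-a)..a, f x :=
  intervalIntegral.integral_mono_interval (by linarith) (by linarith) le_rfl
    (Filter.Eventually.of_forall fun x => hf₀ x) (hf.intervalIntegrable _ _)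

theorem antitoneOn_integral_window_div_integral_symm (hf : Continuous f) (hf₀ : ∀ x, 0 ≤ f x)
    (hmono : ∀ x y, |x| ≤ |y| → f y ≤ f x) {t : ℝ} (ht : 0 ≤ t) :
    AntitoneOn (fun a => (∫ x in (a - t)..a, f x) / ∫ x in (-a)..a, f x) (Ici (t / 2)) := by
  intro a ha b hb hab
  have h0 : Ici (t / 2) ⊆ Ici 0 := Ici_subset_Ici.mpr (by linarith)
  exact div_le_div_of_le_of_le_of_le
    (intervalIntegral.integral_nonneg (by linarith) fun x _ => hf₀ x)
    (antitoneOn_integral_window hf hmono ht ha hb hab)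
    (integral_window_le_integral_symm hf hf₀ ht ha)
    (monotoneOn_integral_symm hf hf₀ (h0 ha) (h0 hb) hab)

end AbsAntitone

theorem gaussian_density_le_of_abs_le (σ : ℝ) {x y : ℝ} (h : |x| ≤ |y|) :
    (Real.sqrt (2 * π * σ ^ 2))⁻¹ * Real.exp (-y ^ 2 / (2 * σ ^ 2)) ≤
      (Real.sqrt (2 * π * σ ^ 2))⁻¹ * Real.exp (-x ^ 2 / (2 * σ ^ 2)) := by
  have hsq : -y ^ 2 / (2 * σ ^ 2) ≤ -x ^ 2 / (2 * σ ^ 2) :=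
    div_le_div_of_nonneg_right (neg_le_neg (sq_le_sq.mpr h)) (by positivity)
  exact mul_le_mul_of_nonneg_left (exp_le_exp.mpr hsq) (by positivity)

theorem W_monotone_in_alpha_general (σ t : ℝ) (ht : 0 ≤ t) :
    ∀ α₁ α₂ : ℝ, 0 < α₁ → t / 2 ≤ α₁ → α₁ ≤ α₂ →
      1 - (∫ x in (α₁ - t)..α₁,
            (Real.sqrt (2 * π * σ ^ 2))⁻¹ * Real.exp (-x ^ 2 / (2 * σ ^ 2))) /
          (∫ x in (-α₁)..α₁,
            (Real.sqrt (2 * π * σ ^ 2))⁻¹ * Real.exp (-x ^ 2 / (2 * σ ^ 2))) ≤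
      1 - (∫ x in (α₂ - t)..α₂,
            (Real.sqrt (2 * π * σ ^ 2))⁻¹ * Real.exp (-x ^ 2 / (2 * σ ^ 2))) /
          (∫ x in (-α₂)..α₂,
            (Real.sqrt (2 * π * σ ^ 2))⁻¹ * Real.exp (-x ^ 2 / (2 * σ ^ 2))) := by
  intro α₁ α₂ _ hα₁ h12
  have hratio := antitoneOn_integral_window_div_integral_symm (by fun_prop)
    (fun x => by positivity) (fun x y => gaussian_density_le_of_abs_le σ) ht hα₁
    (le_trans hα₁ h12) h12
  exact sub_le_sub_left hratio 1

/-- With `φ` the `N(0,σ²)` density, `W(α,t) = 1 − (∫_{α−t}^{α} φ)/(∫_{−α}^{α} φ)`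
is monotone nondecreasing in `α` on `{α : α > 0, α ≥ t/2}`. -/
theorem W_monotone_in_alpha (σ t : ℝ) (hσ : 0 < σ) (ht : 0 ≤ t) :
    ∀ α₁ α₂ : ℝ, 0 < α₁ → t / 2 ≤ α₁ → α₁ ≤ α₂ →
      1 - (∫ x in (α₁ - t)..α₁,
            (Real.sqrt (2 * π * σ ^ 2))⁻¹ * Real.exp (-x ^ 2 / (2 * σ ^ 2))) /
          (∫ x in (-α₁)..α₁,
            (Real.sqrt (2 * π * σ ^ 2))⁻¹ * Real.exp (-x ^ 2 / (2 * σ ^ 2))) ≤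
      1 - (∫ x in (α₂ - t)..α₂,
            (Real.sqrt (2 * π * σ ^ 2))⁻¹ * Real.exp (-x ^ 2 / (2 * σ ^ 2))) /
          (∫ x in (-α₂)..α₂,
            (Real.sqrt (2 * π * σ ^ 2))⁻¹ * Real.exp (-x ^ 2 / (2 * σ ^ 2))) :=
  W_monotone_in_alpha_general σ t ht
end

section
/- Let X₁, X₂ be jointly Gaussian, zero-mean, each with variance σ² > 0 and correlation ρ ∈ [0,1). Define J(a) = E[(X₂ − aX₁)²·1{|X₁| ≥ |X₂|}] + E[(X₁ − aX₂)²·1{|X₁| < |X₂|}] for a ∈ ℝ. Then J is a strictly convex quadratic in a, minimized at a* = ρσ² / (2·E[X₁²·1{|X₁| ≥ |X₂|}]), and moreover a* < 1. -/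
open MeasureTheory Real
open scoped ENNReal NNReal


lemma my_integral_mul_exp_neg_mul_sq (b : ℝ) :
    ∫ x : ℝ, x * Real.exp (-b * x ^ 2) = 0 := by
  have h := integral_neg_eq_self (fun x : ℝ => x * Real.exp (-b * x ^ 2)) (volume : Measure ℝ)
  simp only [neg_sq, neg_mul] at h
  have h2 : ∫ x : ℝ, x * Real.exp (-b * x ^ 2)
      = - ∫ x : ℝ, x * Real.exp (-b * x ^ 2) := by
    conv_lhs => rw [show (fun x : ℝ => x * Real.exp (-b * x ^ 2))
      = fun x : ℝ => x * Real.exp (-(b * x ^ 2)) from by funext x; ring_nf]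
    rw [← h, integral_neg]
    simp [neg_mul]
  linarith

lemma my_sq_mul_exp_le {b : ℝ} (hb : 0 < b) (x : ℝ) :
    x ^ 2 * Real.exp (-b * x ^ 2) ≤ (2 / b) * Real.exp (-(b / 2) * x ^ 2) := by
  have key : x ^ 2 * Real.exp (-(b / 2) * x ^ 2) ≤ 2 / b := by
    have hs : (b / 2) * x ^ 2 ≤ Real.exp ((b / 2) * x ^ 2) := by
      nlinarith [Real.add_one_le_exp ((b / 2) * x ^ 2)]
    have hne : Real.exp (-(b / 2) * x ^ 2) = (Real.exp ((b / 2) * x ^ 2))⁻¹ := by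
      rw [← Real.exp_neg]; ring_nf
    have hepos : (0 : ℝ) < Real.exp ((b / 2) * x ^ 2) := Real.exp_pos _
    rw [hne]
    rw [mul_inv_le_iff₀ hepos, div_mul_eq_mul_div, le_div_iff₀ hb]
    nlinarith [hs, sq_nonneg x]
  have hexp : Real.exp (-b * x ^ 2)
      = Real.exp (-(b / 2) * x ^ 2) * Real.exp (-(b / 2) * x ^ 2) := by
    rw [← Real.exp_add]; ring_nf
  calc x ^ 2 * Real.exp (-b * x ^ 2)
      = (x ^ 2 * Real.exp (-(b / 2) * x ^ 2)) * Real.exp (-(b / 2) * x ^ 2) := by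
        rw [hexp]; ring
    _ ≤ (2 / b) * Real.exp (-(b / 2) * x ^ 2) :=
        mul_le_mul_of_nonneg_right key (Real.exp_pos _).le

lemma my_integrable_sq_mul_exp {b : ℝ} (hb : 0 < b) :
    Integrable fun x : ℝ => x ^ 2 * Real.exp (-b * x ^ 2) := by
  refine Integrable.mono' ((integrable_exp_neg_mul_sq (by linarith : (0:ℝ) < b / 2)).const_mul
    (2 / b)) ?_ ?_
  · exact ((measurable_id.pow_const 2).mul
      (((measurable_id.pow_const 2).const_mul (-b)).exp)).aestronglyMeasurable
  · filter_upwards with x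
    rw [Real.norm_eq_abs, abs_of_nonneg (by positivity)]
    exact my_sq_mul_exp_le hb x

lemma my_integral_sq_mul_exp {b : ℝ} (hb : 0 < b) :
    ∫ x : ℝ, x ^ 2 * Real.exp (-b * x ^ 2) = Real.sqrt (π / b) / (2 * b) := by
  have hu : ∀ x : ℝ, HasDerivAt (fun y : ℝ => y) 1 x := fun x => hasDerivAt_id x
  have hv : ∀ x : ℝ, HasDerivAt (fun y : ℝ => -(2 * b)⁻¹ * Real.exp (-b * y ^ 2))
      (x * Real.exp (-b * x ^ 2)) x := by
    intro x
    have h1 : HasDerivAt (fun y : ℝ => -b * y ^ 2) (-b * (2 * x)) x := by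
      simpa using ((hasDerivAt_pow 2 x).const_mul (-b))
    have h2 := (h1.exp).const_mul (-(2 * b)⁻¹)
    refine h2.congr_deriv ?_
    rw [show -(2 * b)⁻¹ * (Real.exp (-b * x ^ 2) * (-b * (2 * x)))
      = ((2 * b)⁻¹ * (2 * b)) * (x * Real.exp (-b * x ^ 2)) from by ring,
      inv_mul_cancel₀ (by positivity), one_mul]
  have key := integral_mul_deriv_eq_deriv_mul_of_integrable (fun x _ => hu x) (fun x _ => hv x)
    (by have := my_integrable_sq_mul_exp hb
        apply this.congr
        filter_upwards with x; simp [Pi.mul_def]; ring)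
    (by simpa [Pi.mul_def, one_mul] using (integrable_exp_neg_mul_sq hb).const_mul (-(2 * b)⁻¹))
    (by have := (integrable_mul_exp_neg_mul_sq hb).const_mul (-(2 * b)⁻¹)
        apply this.congr
        filter_upwards with x; simp [Pi.mul_def]; ring)
  rw [show (∫ x : ℝ, x * (x * Real.exp (-b * x ^ 2))) = ∫ x : ℝ, x ^ 2 * Real.exp (-b * x ^ 2)
    from by congr 1; funext x; ring] at key
  rw [key, show (∫ x : ℝ, (1 : ℝ) * (-(2 * b)⁻¹ * Real.exp (-b * x ^ 2)))
    = -(2 * b)⁻¹ * ∫ x : ℝ, Real.exp (-b * x ^ 2) from by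
      rw [← integral_const_mul]; congr 1; funext x; ring, integral_gaussian]
  ring

/-- normal density -/

noncomputable def nd (v m t : ℝ) : ℝ :=
  (Real.sqrt (2 * π * v))⁻¹ * Real.exp (-(t - m) ^ 2 / (2 * v))

lemma nd_nonneg {v : ℝ} (hv : 0 ≤ v) (m t : ℝ) : 0 ≤ nd v m t := by
  unfold nd; positivity

lemma nd_eq {v : ℝ} (hv : 0 < v) (m t : ℝ) :
    nd v m t = (Real.sqrt (2 * π * v))⁻¹ * Real.exp (-(2 * v)⁻¹ * (t - m) ^ 2) := by
  unfold nd; congr 1; rw [neg_div, neg_mul]; congr 1; rw [div_eq_inv_mul]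

lemma continuous_nd (v m : ℝ) : Continuous (nd v m) := by
  unfold nd
  fun_prop

lemma integrable_nd {v : ℝ} (hv : 0 < v) (m : ℝ) : Integrable (nd v m) := by
  have h : Integrable (fun t : ℝ => (Real.sqrt (2 * π * v))⁻¹
      * Real.exp (-(2 * v)⁻¹ * t ^ 2)) :=
    (integrable_exp_neg_mul_sq (by positivity)).const_mul _
  have := h.comp_sub_right m
  refine this.congr ?_
  filter_upwards with t
  rw [nd_eq hv]

lemma integral_nd {v : ℝ} (hv : 0 < v) (m : ℝ) : ∫ t : ℝ, nd v m t = 1 := by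
  have h1 : ∫ t : ℝ, nd v m t
      = ∫ t : ℝ, (Real.sqrt (2 * π * v))⁻¹ * Real.exp (-(2 * v)⁻¹ * t ^ 2) := by
    rw [← integral_sub_right_eq_self (fun t => (Real.sqrt (2 * π * v))⁻¹
      * Real.exp (-(2 * v)⁻¹ * t ^ 2)) m]
    congr 1; funext t; rw [nd_eq hv]
  rw [h1, integral_const_mul, integral_gaussian]
  have h2 : π / (2 * v)⁻¹ = 2 * π * v := by field_simp
  rw [h2, inv_mul_cancel₀ (by positivity)]

lemma integrable_id_mul_nd {v : ℝ} (hv : 0 < v) (m : ℝ) :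
    Integrable (fun t : ℝ => t * nd v m t) := by
  have hA : Integrable (fun t : ℝ => (Real.sqrt (2 * π * v))⁻¹
      * (t * Real.exp (-(2 * v)⁻¹ * t ^ 2))) :=
    (integrable_mul_exp_neg_mul_sq (by positivity)).const_mul ((Real.sqrt (2 * π * v))⁻¹)
  have hB : Integrable (fun t : ℝ => m * ((Real.sqrt (2 * π * v))⁻¹
      * Real.exp (-(2 * v)⁻¹ * t ^ 2))) :=
    ((integrable_exp_neg_mul_sq (by positivity)).const_mul
      ((Real.sqrt (2 * π * v))⁻¹)).const_mul m
  have h : Integrable (fun t : ℝ => (t + m) * ((Real.sqrt (2 * π * v))⁻¹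
      * Real.exp (-(2 * v)⁻¹ * t ^ 2))) :=
    (hA.add hB).congr (by filter_upwards with t; simp only [Pi.add_apply]; ring)
  refine (h.comp_sub_right m).congr ?_
  filter_upwards with t
  simp only [sub_add_cancel]
  rw [nd_eq hv]

lemma integral_id_mul_nd {v : ℝ} (hv : 0 < v) (m : ℝ) :
    ∫ t : ℝ, t * nd v m t = m := by
  have h1 : ∫ t : ℝ, t * nd v m t
      = ∫ t : ℝ, (t + m) * ((Real.sqrt (2 * π * v))⁻¹ * Real.exp (-(2 * v)⁻¹ * t ^ 2)) := by
    rw [← integral_sub_right_eq_self (fun t => (t + m) * ((Real.sqrt (2 * π * v))⁻¹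
      * Real.exp (-(2 * v)⁻¹ * t ^ 2))) m]
    congr 1; funext t; simp only [sub_add_cancel]; rw [nd_eq hv]
  rw [h1]
  have hint1 : Integrable (fun t : ℝ => t * ((Real.sqrt (2 * π * v))⁻¹
      * Real.exp (-(2 * v)⁻¹ * t ^ 2))) :=
    ((integrable_mul_exp_neg_mul_sq (by positivity : (0:ℝ) < (2 * v)⁻¹)).const_mul
        ((Real.sqrt (2 * π * v))⁻¹)).congr (by filter_upwards with t; ring)
  have hint2 : Integrable (fun t : ℝ => m * ((Real.sqrt (2 * π * v))⁻¹
      * Real.exp (-(2 * v)⁻¹ * t ^ 2))) :=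
    ((integrable_exp_neg_mul_sq (by positivity)).const_mul
      ((Real.sqrt (2 * π * v))⁻¹)).const_mul m
  rw [show (fun t : ℝ => (t + m) * ((Real.sqrt (2 * π * v))⁻¹
      * Real.exp (-(2 * v)⁻¹ * t ^ 2)))
    = (fun t : ℝ => t * ((Real.sqrt (2 * π * v))⁻¹ * Real.exp (-(2 * v)⁻¹ * t ^ 2))
        + m * ((Real.sqrt (2 * π * v))⁻¹ * Real.exp (-(2 * v)⁻¹ * t ^ 2))) from by
      funext t; ring]
  rw [integral_add hint1 hint2]
  have hz : ∫ t : ℝ, t * ((Real.sqrt (2 * π * v))⁻¹ * Real.exp (-(2 * v)⁻¹ * t ^ 2)) = 0 := by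
    rw [show (fun t : ℝ => t * ((Real.sqrt (2 * π * v))⁻¹ * Real.exp (-(2 * v)⁻¹ * t ^ 2)))
      = (fun t : ℝ => (Real.sqrt (2 * π * v))⁻¹ * (t * Real.exp (-(2 * v)⁻¹ * t ^ 2))) from by
        funext t; ring]
    rw [integral_const_mul, my_integral_mul_exp_neg_mul_sq, mul_zero]
  rw [hz, zero_add, integral_const_mul, integral_const_mul, integral_gaussian]
  have h2 : π / (2 * v)⁻¹ = 2 * π * v := by field_simp
  rw [h2, inv_mul_cancel₀ (by positivity), mul_one]

lemma integrable_sq_mul_nd {v : ℝ} (hv : 0 < v) :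
    Integrable (fun t : ℝ => t ^ 2 * nd v 0 t) := by
  refine ((my_integrable_sq_mul_exp (by positivity : (0:ℝ) < (2 * v)⁻¹)).const_mul
    ((Real.sqrt (2 * π * v))⁻¹)).congr ?_
  filter_upwards with t
  rw [nd_eq hv, sub_zero]; ring

lemma integral_sq_mul_nd {v : ℝ} (hv : 0 < v) :
    ∫ t : ℝ, t ^ 2 * nd v 0 t = v := by
  have h1 : ∫ t : ℝ, t ^ 2 * nd v 0 t
      = (Real.sqrt (2 * π * v))⁻¹ * ∫ t : ℝ, t ^ 2 * Real.exp (-(2 * v)⁻¹ * t ^ 2) := by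
    rw [← integral_const_mul]
    congr 1; funext t; rw [nd_eq hv, sub_zero]; ring
  rw [h1, my_integral_sq_mul_exp (by positivity)]
  have h2 : π / (2 * v)⁻¹ = 2 * π * v := by field_simp
  rw [h2, show (2 * (2 * v)⁻¹) = v⁻¹ from by field_simp]
  rw [div_eq_mul_inv, inv_inv, ← mul_assoc,
    inv_mul_cancel₀ (by positivity : Real.sqrt (2 * π * v) ≠ 0), one_mul]

lemma hrr {ρ : ℝ} (hρ0 : 0 ≤ ρ) (hρ1 : ρ < 1) : 0 < 1 - ρ ^ 2 := by nlinarith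

noncomputable def g2 (σ ρ : ℝ) (p : ℝ × ℝ) : ℝ :=
  (2 * π * σ ^ 2 * Real.sqrt (1 - ρ ^ 2))⁻¹ *
    Real.exp (-(p.1 ^ 2 - 2 * ρ * p.1 * p.2 + p.2 ^ 2) / (2 * σ ^ 2 * (1 - ρ ^ 2)))

section C

variable {σ ρ : ℝ} (hσ : 0 < σ) (hρ0 : 0 ≤ ρ) (hρ1 : ρ < 1)



lemma g2_nonneg (p : ℝ × ℝ) : 0 ≤ g2 σ ρ p := by
  unfold g2
  have h1 : 0 ≤ Real.sqrt (1 - ρ ^ 2) := Real.sqrt_nonneg _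
  positivity

lemma continuous_g2 : Continuous (g2 σ ρ) := by unfold g2; fun_prop

lemma g2_symm (p : ℝ × ℝ) : g2 σ ρ p.swap = g2 σ ρ p := by
  unfold g2
  congr 2
  simp only [Prod.fst_swap, Prod.snd_swap]
  ring

include hσ hρ0 hρ1 in
lemma g2_eq_prod (p : ℝ × ℝ) :
    g2 σ ρ p = nd (σ ^ 2) 0 p.1 * nd (σ ^ 2 * (1 - ρ ^ 2)) (ρ * p.1) p.2 := by
  have h2 : (0:ℝ) < 1 - ρ ^ 2 := hrr hρ0 hρ1
  unfold g2 nd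
  rw [show ((Real.sqrt (2 * π * σ ^ 2))⁻¹ * Real.exp (-(p.1 - 0) ^ 2 / (2 * σ ^ 2))) *
      ((Real.sqrt (2 * π * (σ ^ 2 * (1 - ρ ^ 2))))⁻¹
        * Real.exp (-(p.2 - ρ * p.1) ^ 2 / (2 * (σ ^ 2 * (1 - ρ ^ 2)))))
    = ((Real.sqrt (2 * π * σ ^ 2))⁻¹ * (Real.sqrt (2 * π * (σ ^ 2 * (1 - ρ ^ 2))))⁻¹)
      * (Real.exp (-(p.1 - 0) ^ 2 / (2 * σ ^ 2))
        * Real.exp (-(p.2 - ρ * p.1) ^ 2 / (2 * (σ ^ 2 * (1 - ρ ^ 2))))) from by ring]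
  congr 1
  · rw [← mul_inv, ← Real.sqrt_mul (by positivity)]
    congr 1
    rw [show (2 * π * σ ^ 2 * (2 * π * (σ ^ 2 * (1 - ρ ^ 2))))
      = (2 * π * σ ^ 2) ^ 2 * (1 - ρ ^ 2) from by ring]
    rw [Real.sqrt_mul (by positivity), Real.sqrt_sq (by positivity)]
  · rw [← Real.exp_add]
    congr 1
    have hσ' : (σ:ℝ) ≠ 0 := hσ.ne'
    field_simp [h2.ne']
    ring

include hσ hρ0 hρ1 in
lemma g2_le (p : ℝ × ℝ) :
    g2 σ ρ p ≤ (2 * π * σ ^ 2 * Real.sqrt (1 - ρ ^ 2))⁻¹ *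
      (Real.exp (-(2 * σ ^ 2 * (1 + ρ))⁻¹ * p.1 ^ 2) *
       Real.exp (-(2 * σ ^ 2 * (1 + ρ))⁻¹ * p.2 ^ 2)) := by
  have h2 : (0:ℝ) < 1 - ρ ^ 2 := hrr hρ0 hρ1
  have hD : (0:ℝ) < 2 * σ ^ 2 * (1 - ρ ^ 2) := by positivity
  unfold g2
  apply mul_le_mul_of_nonneg_left _ (by positivity)
  rw [← Real.exp_add]
  apply Real.exp_le_exp.mpr
  have hQ : (1 - ρ) * (p.1 ^ 2 + p.2 ^ 2) ≤ p.1 ^ 2 - 2 * ρ * p.1 * p.2 + p.2 ^ 2 := by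
    nlinarith [sq_nonneg (p.1 - p.2), hρ0]
  have hcD : (2 * σ ^ 2 * (1 + ρ))⁻¹ * (2 * σ ^ 2 * (1 - ρ ^ 2)) = 1 - ρ := by
    have hσ' : (σ:ℝ) ≠ 0 := hσ.ne'
    have h1ρ : (1:ℝ) + ρ ≠ 0 := by nlinarith
    field_simp
    ring
  have key : (2 * σ ^ 2 * (1 + ρ))⁻¹ * (p.1 ^ 2 + p.2 ^ 2)
      ≤ (p.1 ^ 2 - 2 * ρ * p.1 * p.2 + p.2 ^ 2) / (2 * σ ^ 2 * (1 - ρ ^ 2)) := by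
    rw [le_div_iff₀ hD]
    calc (2 * σ ^ 2 * (1 + ρ))⁻¹ * (p.1 ^ 2 + p.2 ^ 2) * (2 * σ ^ 2 * (1 - ρ ^ 2))
        = ((2 * σ ^ 2 * (1 + ρ))⁻¹ * (2 * σ ^ 2 * (1 - ρ ^ 2))) * (p.1 ^ 2 + p.2 ^ 2) := by
          ring
      _ = (1 - ρ) * (p.1 ^ 2 + p.2 ^ 2) := by rw [hcD]
      _ ≤ _ := hQ
  rw [neg_div]
  nlinarith [key]

include hσ hρ0 hρ1 in
lemma integrable_mul_g2 {F : ℝ × ℝ → ℝ} (hF : Measurable F) {C : ℝ}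
    (hC : ∀ p : ℝ × ℝ, |F p| ≤ C * ((p.1 ^ 2 + 1) * (p.2 ^ 2 + 1))) :
    Integrable (fun p : ℝ × ℝ => F p * g2 σ ρ p) := by
  set c : ℝ := (2 * σ ^ 2 * (1 + ρ))⁻¹ with hcdef
  have hc : 0 < c := by rw [hcdef]; positivity
  have h1 : Integrable (fun t : ℝ => (t ^ 2 + 1) * Real.exp (-c * t ^ 2)) :=
    ((my_integrable_sq_mul_exp hc).add (integrable_exp_neg_mul_sq hc)).congr
      (by filter_upwards with t; simp only [Pi.add_apply]; ring)
  have hprod : Integrable (fun p : ℝ × ℝ =>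
      ((p.1 ^ 2 + 1) * Real.exp (-c * p.1 ^ 2)) * ((p.2 ^ 2 + 1) * Real.exp (-c * p.2 ^ 2)))
      (volume : Measure (ℝ × ℝ)) := by
    rw [Measure.volume_eq_prod]
    exact h1.mul_prod h1
  refine ((hprod.const_mul
    (C * (2 * π * σ ^ 2 * Real.sqrt (1 - ρ ^ 2))⁻¹)).mono'
    (hF.mul (continuous_g2 (σ := σ) (ρ := ρ)).measurable).aestronglyMeasurable ?_)
  filter_upwards with p
  rw [Real.norm_eq_abs, abs_mul, abs_of_nonneg (g2_nonneg p)]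
  have hb1 : (0:ℝ) ≤ C * ((p.1 ^ 2 + 1) * (p.2 ^ 2 + 1)) := le_trans (abs_nonneg _) (hC p)
  calc |F p| * g2 σ ρ p
      ≤ (C * ((p.1 ^ 2 + 1) * (p.2 ^ 2 + 1))) *
        ((2 * π * σ ^ 2 * Real.sqrt (1 - ρ ^ 2))⁻¹ *
          (Real.exp (-c * p.1 ^ 2) * Real.exp (-c * p.2 ^ 2))) := by
        exact mul_le_mul (hC p) (g2_le hσ hρ0 hρ1 p) (g2_nonneg p) hb1
    _ = C * (2 * π * σ ^ 2 * Real.sqrt (1 - ρ ^ 2))⁻¹ *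
        (((p.1 ^ 2 + 1) * Real.exp (-c * p.1 ^ 2)) *
          ((p.2 ^ 2 + 1) * Real.exp (-c * p.2 ^ 2))) := by ring

include hσ hρ0 hρ1 in
lemma integral_fst_mul_snd_mul_g2 :
    ∫ p : ℝ × ℝ, p.1 * p.2 * g2 σ ρ p = ρ * σ ^ 2 := by
  have h2 : (0:ℝ) < 1 - ρ ^ 2 := hrr hρ0 hρ1
  have hv : (0:ℝ) < σ ^ 2 := by positivity
  have hv2 : (0:ℝ) < σ ^ 2 * (1 - ρ ^ 2) := by positivity
  have hint : Integrable (fun p : ℝ × ℝ => p.1 * p.2 * g2 σ ρ p) := by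
    refine integrable_mul_g2 hσ hρ0 hρ1 (measurable_fst.mul measurable_snd) (C := 1) ?_
    intro p
    rw [abs_mul, one_mul]
    nlinarith [sq_nonneg (|p.1| - 1), sq_nonneg (|p.2| - 1), abs_nonneg p.1, abs_nonneg p.2,
      mul_nonneg (abs_nonneg p.1) (abs_nonneg p.2), sq_abs p.1, sq_abs p.2]
  rw [Measure.volume_eq_prod] at hint ⊢
  rw [integral_prod _ hint]
  have hinner : ∀ x : ℝ, (∫ y : ℝ, (x, y).1 * (x, y).2 * g2 σ ρ (x, y))
      = ρ * (x ^ 2 * nd (σ ^ 2) 0 x) := by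
    intro x
    rw [show (fun y : ℝ => (x, y).1 * (x, y).2 * g2 σ ρ (x, y))
      = fun y : ℝ => (x * nd (σ ^ 2) 0 x) *
          (y * nd (σ ^ 2 * (1 - ρ ^ 2)) (ρ * x) y) from by
        funext y; rw [g2_eq_prod hσ hρ0 hρ1 (x, y)]; ring]
    rw [integral_const_mul, integral_id_mul_nd hv2 (ρ * x)]
    ring
  simp only [hinner]
  rw [integral_const_mul, integral_sq_mul_nd hv]

include hσ hρ0 hρ1 in
lemma integral_fst_sq_mul_g2 :
    ∫ p : ℝ × ℝ, p.1 ^ 2 * g2 σ ρ p = σ ^ 2 := by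
  have h2 : (0:ℝ) < 1 - ρ ^ 2 := hrr hρ0 hρ1
  have hv : (0:ℝ) < σ ^ 2 := by positivity
  have hv2 : (0:ℝ) < σ ^ 2 * (1 - ρ ^ 2) := by positivity
  have hint : Integrable (fun p : ℝ × ℝ => p.1 ^ 2 * g2 σ ρ p) := by
    refine integrable_mul_g2 hσ hρ0 hρ1 (measurable_fst.pow_const 2) (C := 1) ?_
    intro p
    rw [abs_of_nonneg (sq_nonneg _), one_mul]
    nlinarith [sq_nonneg p.1, sq_nonneg p.2]
  rw [Measure.volume_eq_prod] at hint ⊢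
  rw [integral_prod _ hint]
  have hinner : ∀ x : ℝ, (∫ y : ℝ, (x, y).1 ^ 2 * g2 σ ρ (x, y))
      = x ^ 2 * nd (σ ^ 2) 0 x := by
    intro x
    rw [show (fun y : ℝ => (x, y).1 ^ 2 * g2 σ ρ (x, y))
      = fun y : ℝ => (x ^ 2 * nd (σ ^ 2) 0 x) *
          (nd (σ ^ 2 * (1 - ρ ^ 2)) (ρ * x) y) from by
        funext y; rw [g2_eq_prod hσ hρ0 hρ1 (x, y)]; ring]
    rw [integral_const_mul, integral_nd hv2 (ρ * x), mul_one]
  simp only [hinner]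
  rw [integral_sq_mul_nd hv]

lemma null_graph {f : ℝ → ℝ} (hf : Measurable f) :
    (volume : Measure (ℝ × ℝ)) {p : ℝ × ℝ | p.2 = f p.1} = 0 := by
  rw [Measure.volume_eq_prod]
  have hms : MeasurableSet {p : ℝ × ℝ | p.2 = f p.1} :=
    measurableSet_eq_fun measurable_snd (hf.comp measurable_fst)
  rw [Measure.prod_apply hms]
  have : ∀ x : ℝ, (volume : Measure ℝ) (Prod.mk x ⁻¹' {p : ℝ × ℝ | p.2 = f p.1}) = 0 := by
    intro x
    have : Prod.mk x ⁻¹' {p : ℝ × ℝ | p.2 = f p.1} = {f x} := by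
      ext y; simp [Set.mem_preimage]
    rw [this]
    exact measure_singleton _
  simp only [this]
  simp

lemma null_absdiag : (volume : Measure (ℝ × ℝ)) {p : ℝ × ℝ | |p.1| = |p.2|} = 0 := by
  have hsub : {p : ℝ × ℝ | |p.1| = |p.2|}
      ⊆ {p : ℝ × ℝ | p.2 = p.1} ∪ {p : ℝ × ℝ | p.2 = -p.1} := by
    intro p hp
    rcases abs_eq_abs.mp hp with h | h
    · left; exact h.symm
    · right; simp [h]
  refine measure_mono_null hsub ?_
  refine measure_union_null (null_graph measurable_id) (null_graph measurable_neg)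

end C

lemma quad_strictConvexOn {c β d : ℝ} (hc : 0 < c) :
    StrictConvexOn ℝ Set.univ (fun a : ℝ => c * a ^ 2 + β * a + d) := by
  refine ⟨convex_univ, ?_⟩
  intro x _ y _ hxy t s ht hs hts
  simp only [smul_eq_mul]
  have hxy' : x - y ≠ 0 := sub_ne_zero.mpr hxy
  have hsq : 0 < (x - y) ^ 2 := by positivity
  have hs' : s = 1 - t := by linarith
  have key : t * (c * x ^ 2 + β * x + d) + s * (c * y ^ 2 + β * y + d)
      - (c * (t * x + s * y) ^ 2 + β * (t * x + s * y) + d) = c * t * s * (x - y) ^ 2 := by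
    rw [hs']; ring
  nlinarith [mul_pos (mul_pos hc (mul_pos ht hs)) hsq, key]

set_option maxHeartbeats 2000000 in
/-- For zero-mean jointly Gaussian `(X₁, X₂)` with common variance `σ² > 0` and
correlation `ρ ∈ [0,1)` (law given by the symmetric bivariate Gaussian
density), the max-scheduling linear-estimation cost
`J(a) = E[(X₂ − aX₁)²1{|X₁|≥|X₂|}] + E[(X₁ − aX₂)²1{|X₁|<|X₂|}]`
is a strictly convex quadratic minimized at
`a* = ρσ² / (2 E[X₁² 1{|X₁|≥|X₂|}])`, and `a* < 1`. -/
theorem linear_symmetric_optimal {Ω : Type*} [MeasureSpace Ω]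
    [IsProbabilityMeasure (volume : Measure Ω)]
    (X₁ X₂ : Ω → ℝ) (hX₁ : Measurable X₁) (hX₂ : Measurable X₂)
    (σ ρ : ℝ) (hσ : 0 < σ) (hρ0 : 0 ≤ ρ) (hρ1 : ρ < 1)
    (hlaw : Measure.map (fun ω => (X₁ ω, X₂ ω)) volume =
      (volume : Measure (ℝ × ℝ)).withDensity (fun x => ENNReal.ofReal
        ((2 * π * σ ^ 2 * Real.sqrt (1 - ρ ^ 2))⁻¹ *
          Real.exp (-(x.1 ^ 2 - 2 * ρ * x.1 * x.2 + x.2 ^ 2) /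
            (2 * σ ^ 2 * (1 - ρ ^ 2)))))) :
    StrictConvexOn ℝ Set.univ (fun a : ℝ =>
      (∫ ω, (if |X₂ ω| ≤ |X₁ ω| then (X₂ ω - a * X₁ ω) ^ 2 else 0)) +
      (∫ ω, (if |X₂ ω| ≤ |X₁ ω| then 0 else (X₁ ω - a * X₂ ω) ^ 2))) ∧
    (∀ a : ℝ,
      (∫ ω, (if |X₂ ω| ≤ |X₁ ω| then
          (X₂ ω - (ρ * σ ^ 2 /
            (2 * ∫ ω', (if |X₂ ω'| ≤ |X₁ ω'| then (X₁ ω') ^ 2 else 0))) * X₁ ω) ^ 2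
        else 0)) +
      (∫ ω, (if |X₂ ω| ≤ |X₁ ω| then 0 else
          (X₁ ω - (ρ * σ ^ 2 /
            (2 * ∫ ω', (if |X₂ ω'| ≤ |X₁ ω'| then (X₁ ω') ^ 2 else 0))) * X₂ ω) ^ 2)) ≤
      (∫ ω, (if |X₂ ω| ≤ |X₁ ω| then (X₂ ω - a * X₁ ω) ^ 2 else 0)) +
      (∫ ω, (if |X₂ ω| ≤ |X₁ ω| then 0 else (X₁ ω - a * X₂ ω) ^ 2))) ∧
    ρ * σ ^ 2 / (2 * ∫ ω', (if |X₂ ω'| ≤ |X₁ ω'| then (X₁ ω') ^ 2 else 0)) < 1 := by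
  classical
  have hlaw' : Measure.map (fun ω => (X₁ ω, X₂ ω)) volume =
      (volume : Measure (ℝ × ℝ)).withDensity (fun p => ENNReal.ofReal (g2 σ ρ p)) := hlaw
  -- transfer
  have hg2m : Measurable fun p : ℝ × ℝ => (g2 σ ρ p).toNNReal :=
    measurable_real_toNNReal.comp (continuous_g2 (σ := σ) (ρ := ρ)).measurable
  have transfer : ∀ F : ℝ × ℝ → ℝ, Measurable F →
      (∫ ω, F (X₁ ω, X₂ ω)) = ∫ p : ℝ × ℝ, F p * g2 σ ρ p := by
    intro F hF
    have hmap : AEMeasurable (fun ω => (X₁ ω, X₂ ω)) volume := (hX₁.prodMk hX₂).aemeasurable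
    rw [← integral_map hmap hF.aestronglyMeasurable, hlaw']
    rw [show (fun p : ℝ × ℝ => ENNReal.ofReal (g2 σ ρ p))
      = (fun p : ℝ × ℝ => ((g2 σ ρ p).toNNReal : ℝ≥0∞)) from rfl]
    rw [integral_withDensity_eq_integral_smul hg2m F]
    congr 1; funext p
    rw [NNReal.smul_def, smul_eq_mul, Real.coe_toNNReal _ (g2_nonneg p), mul_comm]
  have hSmeas : MeasurableSet {p : ℝ × ℝ | |p.2| ≤ |p.1|} :=
    measurableSet_le measurable_snd.abs measurable_fst.abs
  -- six basic integrals
  set K := ∫ p : ℝ × ℝ, (if |p.2| ≤ |p.1| then p.1 ^ 2 else 0) * g2 σ ρ p with hKdef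
  set K2 := ∫ p : ℝ × ℝ, (if |p.2| ≤ |p.1| then 0 else p.2 ^ 2) * g2 σ ρ p with hK2def
  set B1 := ∫ p : ℝ × ℝ, (if |p.2| ≤ |p.1| then p.1 * p.2 else 0) * g2 σ ρ p with hB1def
  set B2 := ∫ p : ℝ × ℝ, (if |p.2| ≤ |p.1| then 0 else p.1 * p.2) * g2 σ ρ p with hB2def
  set c1 := ∫ p : ℝ × ℝ, (if |p.2| ≤ |p.1| then p.2 ^ 2 else 0) * g2 σ ρ p with hc1def
  set c2 := ∫ p : ℝ × ℝ, (if |p.2| ≤ |p.1| then 0 else p.1 ^ 2) * g2 σ ρ p with hc2def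
  have habs : ∀ x y : ℝ, |x| * |y| ≤ (x ^ 2 + 1) * (y ^ 2 + 1) := by
    intro x y
    nlinarith [sq_nonneg (|x| - 1), sq_nonneg (|y| - 1), abs_nonneg x, abs_nonneg y,
      mul_nonneg (abs_nonneg x) (abs_nonneg y), sq_abs x, sq_abs y]
  have hsqb : ∀ x y : ℝ, x ^ 2 ≤ (x ^ 2 + 1) * (y ^ 2 + 1) := by
    intro x y; nlinarith [sq_nonneg x, sq_nonneg y]
  have hIK : Integrable (fun p : ℝ × ℝ => (if |p.2| ≤ |p.1| then p.1 ^ 2 else 0) * g2 σ ρ p) := by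
    refine integrable_mul_g2 hσ hρ0 hρ1
      (Measurable.ite hSmeas (measurable_fst.pow_const 2) measurable_const) (C := 1) ?_
    intro p; rw [one_mul]; split_ifs
    · rw [abs_of_nonneg (sq_nonneg _)]; exact hsqb _ _
    · simp; positivity
  have hIK2 : Integrable (fun p : ℝ × ℝ => (if |p.2| ≤ |p.1| then 0 else p.2 ^ 2) * g2 σ ρ p) := by
    refine integrable_mul_g2 hσ hρ0 hρ1
      (Measurable.ite hSmeas measurable_const (measurable_snd.pow_const 2)) (C := 1) ?_
    intro p; rw [one_mul]; split_ifs
    · simp; positivity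
    · rw [abs_of_nonneg (sq_nonneg _)]
      calc (p.2:ℝ) ^ 2 ≤ (p.2 ^ 2 + 1) * (p.1 ^ 2 + 1) := hsqb _ _
        _ = (p.1 ^ 2 + 1) * (p.2 ^ 2 + 1) := by ring
  have hIB1 : Integrable (fun p : ℝ × ℝ => (if |p.2| ≤ |p.1| then p.1 * p.2 else 0) * g2 σ ρ p) := by
    refine integrable_mul_g2 hσ hρ0 hρ1
      (Measurable.ite hSmeas (measurable_fst.mul measurable_snd) measurable_const) (C := 1) ?_
    intro p; rw [one_mul]; split_ifs
    · rw [abs_mul]; exact habs _ _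
    · simp; positivity
  have hIB2 : Integrable (fun p : ℝ × ℝ => (if |p.2| ≤ |p.1| then 0 else p.1 * p.2) * g2 σ ρ p) := by
    refine integrable_mul_g2 hσ hρ0 hρ1
      (Measurable.ite hSmeas measurable_const (measurable_fst.mul measurable_snd)) (C := 1) ?_
    intro p; rw [one_mul]; split_ifs
    · simp; positivity
    · rw [abs_mul]; exact habs _ _
  have hIc1 : Integrable (fun p : ℝ × ℝ => (if |p.2| ≤ |p.1| then p.2 ^ 2 else 0) * g2 σ ρ p) := by
    refine integrable_mul_g2 hσ hρ0 hρ1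
      (Measurable.ite hSmeas (measurable_snd.pow_const 2) measurable_const) (C := 1) ?_
    intro p; rw [one_mul]; split_ifs
    · rw [abs_of_nonneg (sq_nonneg _)]
      calc (p.2:ℝ) ^ 2 ≤ (p.2 ^ 2 + 1) * (p.1 ^ 2 + 1) := hsqb _ _
        _ = (p.1 ^ 2 + 1) * (p.2 ^ 2 + 1) := by ring
    · simp; positivity
  have hIc2 : Integrable (fun p : ℝ × ℝ => (if |p.2| ≤ |p.1| then 0 else p.1 ^ 2) * g2 σ ρ p) := by
    refine integrable_mul_g2 hσ hρ0 hρ1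
      (Measurable.ite hSmeas measurable_const (measurable_fst.pow_const 2)) (C := 1) ?_
    intro p; rw [one_mul]; split_ifs
    · simp; positivity
    · rw [abs_of_nonneg (sq_nonneg _)]; exact hsqb _ _
  have hIxy : Integrable (fun p : ℝ × ℝ => p.1 * p.2 * g2 σ ρ p) := by
    refine integrable_mul_g2 hσ hρ0 hρ1 (measurable_fst.mul measurable_snd) (C := 1) ?_
    intro p; rw [one_mul, abs_mul]; exact habs _ _
  have hIxx : Integrable (fun p : ℝ × ℝ => p.1 ^ 2 * g2 σ ρ p) := by
    refine integrable_mul_g2 hσ hρ0 hρ1 (measurable_fst.pow_const 2) (C := 1) ?_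
    intro p; rw [one_mul, abs_of_nonneg (sq_nonneg _)]; exact hsqb _ _
  -- B1 + B2 = ρσ²
  have hB : B1 + B2 = ρ * σ ^ 2 := by
    rw [hB1def, hB2def, ← integral_add hIB1 hIB2]
    rw [show (fun p : ℝ × ℝ => (if |p.2| ≤ |p.1| then p.1 * p.2 else 0) * g2 σ ρ p
        + (if |p.2| ≤ |p.1| then 0 else p.1 * p.2) * g2 σ ρ p)
      = fun p : ℝ × ℝ => p.1 * p.2 * g2 σ ρ p from by
        funext p; split_ifs <;> ring]
    exact integral_fst_mul_snd_mul_g2 hσ hρ0 hρ1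
  -- K2 = K by symmetry
  have hK2K : K2 = K := by
    rw [hK2def, hKdef]
    have hswap : (∫ p : ℝ × ℝ, (if |p.2| ≤ |p.1| then 0 else p.2 ^ 2) * g2 σ ρ p)
        = ∫ p : ℝ × ℝ, (if |p.1| ≤ |p.2| then 0 else p.1 ^ 2) * g2 σ ρ p := by
      rw [Measure.volume_eq_prod]
      rw [← integral_prod_swap (fun p : ℝ × ℝ => (if |p.2| ≤ |p.1| then 0 else p.2 ^ 2) * g2 σ ρ p)]
      congr 1
      funext p
      simp only [Prod.fst_swap, Prod.snd_swap]
      rw [g2_symm]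
    rw [hswap]
    apply integral_congr_ae
    have hae : ∀ᵐ p : ℝ × ℝ, ¬ (|p.1| = |p.2|) := by
      rw [ae_iff]
      simp only [not_not]
      exact null_absdiag
    filter_upwards [hae] with p hp
    by_cases h1 : |p.1| ≤ |p.2|
    · by_cases h2 : |p.2| ≤ |p.1|
      · exact absurd (le_antisymm h1 h2) hp
      · simp [h1, h2]
    · by_cases h2 : |p.2| ≤ |p.1|
      · simp [h1, h2]
      · exact absurd (le_of_not_ge h2) h1
  -- 2K ≥ σ²
  have hKbig : σ ^ 2 ≤ K + K2 := by
    rw [hKdef, hK2def, ← integral_add hIK hIK2]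
    rw [← integral_fst_sq_mul_g2 hσ hρ0 hρ1]
    apply integral_mono hIxx (hIK.add hIK2)
    intro p
    simp only [Pi.add_apply]
    have hg := g2_nonneg (σ := σ) (ρ := ρ) p
    have : p.1 ^ 2 ≤ (if |p.2| ≤ |p.1| then p.1 ^ 2 else 0) +
        (if |p.2| ≤ |p.1| then 0 else p.2 ^ 2) := by
      split_ifs with h
      · simp
      · have h' : |p.1| ≤ |p.2| := le_of_not_ge h
        nlinarith [sq_abs p.1, sq_abs p.2, abs_nonneg p.1, h']
    nlinarith [mul_le_mul_of_nonneg_right this hg]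
  have hσ2 : (0:ℝ) < σ ^ 2 := by positivity
  have h2K : (0:ℝ) < 2 * K := by nlinarith [hKbig, hK2K]
  -- quadratic expansions
  have hJ1 : ∀ a : ℝ, (∫ p : ℝ × ℝ, (if |p.2| ≤ |p.1| then (p.2 - a * p.1) ^ 2 else 0) * g2 σ ρ p)
      = c1 - 2 * a * B1 + a ^ 2 * K := by
    intro a
    rw [show (fun p : ℝ × ℝ => (if |p.2| ≤ |p.1| then (p.2 - a * p.1) ^ 2 else 0) * g2 σ ρ p)
      = fun p : ℝ × ℝ => ((if |p.2| ≤ |p.1| then p.2 ^ 2 else 0) * g2 σ ρ p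
          - (2 * a) * ((if |p.2| ≤ |p.1| then p.1 * p.2 else 0) * g2 σ ρ p))
        + (a ^ 2) * ((if |p.2| ≤ |p.1| then p.1 ^ 2 else 0) * g2 σ ρ p) from by
        funext p; split_ifs <;> ring]
    have i3 : Integrable (fun p : ℝ × ℝ =>
        2 * a * ((if |p.2| ≤ |p.1| then p.1 * p.2 else 0) * g2 σ ρ p)) :=
      hIB1.const_mul (2 * a)
    have i1 : Integrable (fun p : ℝ × ℝ =>
        (if |p.2| ≤ |p.1| then p.2 ^ 2 else 0) * g2 σ ρ p
          - 2 * a * ((if |p.2| ≤ |p.1| then p.1 * p.2 else 0) * g2 σ ρ p)) := hIc1.sub i3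
    have i2 : Integrable (fun p : ℝ × ℝ =>
        a ^ 2 * ((if |p.2| ≤ |p.1| then p.1 ^ 2 else 0) * g2 σ ρ p)) :=
      hIK.const_mul (a ^ 2)
    rw [integral_add i1 i2, integral_sub hIc1 i3, integral_const_mul, integral_const_mul]
  have hJ2 : ∀ a : ℝ, (∫ p : ℝ × ℝ, (if |p.2| ≤ |p.1| then 0 else (p.1 - a * p.2) ^ 2) * g2 σ ρ p)
      = c2 - 2 * a * B2 + a ^ 2 * K2 := by
    intro a
    rw [show (fun p : ℝ × ℝ => (if |p.2| ≤ |p.1| then 0 else (p.1 - a * p.2) ^ 2) * g2 σ ρ p)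
      = fun p : ℝ × ℝ => ((if |p.2| ≤ |p.1| then 0 else p.1 ^ 2) * g2 σ ρ p
          - (2 * a) * ((if |p.2| ≤ |p.1| then 0 else p.1 * p.2) * g2 σ ρ p))
        + (a ^ 2) * ((if |p.2| ≤ |p.1| then 0 else p.2 ^ 2) * g2 σ ρ p) from by
        funext p; split_ifs <;> ring]
    have i3 : Integrable (fun p : ℝ × ℝ =>
        2 * a * ((if |p.2| ≤ |p.1| then 0 else p.1 * p.2) * g2 σ ρ p)) :=
      hIB2.const_mul (2 * a)
    have i1 : Integrable (fun p : ℝ × ℝ =>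
        (if |p.2| ≤ |p.1| then 0 else p.1 ^ 2) * g2 σ ρ p
          - 2 * a * ((if |p.2| ≤ |p.1| then 0 else p.1 * p.2) * g2 σ ρ p)) := hIc2.sub i3
    have i2 : Integrable (fun p : ℝ × ℝ =>
        a ^ 2 * ((if |p.2| ≤ |p.1| then 0 else p.2 ^ 2) * g2 σ ρ p)) :=
      hIK2.const_mul (a ^ 2)
    rw [integral_add i1 i2, integral_sub hIc2 i3, integral_const_mul, integral_const_mul]
  -- transfer of the Ω integrals
  have hmeasq1 : ∀ a : ℝ, Measurable (fun p : ℝ × ℝ =>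
      if |p.2| ≤ |p.1| then (p.2 - a * p.1) ^ 2 else (0:ℝ)) := by
    intro a
    exact Measurable.ite hSmeas
      ((measurable_snd.sub (measurable_fst.const_mul a)).pow_const 2) measurable_const
  have hmeasq2 : ∀ a : ℝ, Measurable (fun p : ℝ × ℝ =>
      if |p.2| ≤ |p.1| then (0:ℝ) else (p.1 - a * p.2) ^ 2) := by
    intro a
    exact Measurable.ite hSmeas measurable_const
      ((measurable_fst.sub (measurable_snd.const_mul a)).pow_const 2)
  have hint1q : ∀ a : ℝ, Integrable (fun p : ℝ × ℝ =>
      (if |p.2| ≤ |p.1| then (p.2 - a * p.1) ^ 2 else 0) * g2 σ ρ p) := by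
    intro a
    refine integrable_mul_g2 hσ hρ0 hρ1 (hmeasq1 a) (C := 2 + 2 * a ^ 2) ?_
    intro p; split_ifs
    · rw [abs_of_nonneg (sq_nonneg _)]
      have h1 : (p.2 - a * p.1) ^ 2 ≤ 2 * p.2 ^ 2 + 2 * a ^ 2 * p.1 ^ 2 := by
        nlinarith [sq_nonneg (p.2 + a * p.1)]
      have h2 : 2 * p.2 ^ 2 + 2 * a ^ 2 * p.1 ^ 2
          ≤ (2 + 2 * a ^ 2) * ((p.1 ^ 2 + 1) * (p.2 ^ 2 + 1)) := by
        nlinarith [sq_nonneg p.1, sq_nonneg p.2, sq_nonneg a,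
          mul_nonneg (sq_nonneg a) (sq_nonneg p.1),
          mul_nonneg (sq_nonneg p.1) (sq_nonneg p.2),
          mul_nonneg (mul_nonneg (sq_nonneg a) (sq_nonneg p.1)) (sq_nonneg p.2)]
      linarith
    · simp only [abs_zero]
      positivity
  have he1 : ∀ a : ℝ, (∫ ω, (if |X₂ ω| ≤ |X₁ ω| then (X₂ ω - a * X₁ ω) ^ 2 else 0))
      = ∫ p : ℝ × ℝ, (if |p.2| ≤ |p.1| then (p.2 - a * p.1) ^ 2 else 0) * g2 σ ρ p := by
    intro a
    exact transfer (fun p : ℝ × ℝ => if |p.2| ≤ |p.1| then (p.2 - a * p.1) ^ 2 else 0) (hmeasq1 a)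
  have he2 : ∀ a : ℝ, (∫ ω, (if |X₂ ω| ≤ |X₁ ω| then 0 else (X₁ ω - a * X₂ ω) ^ 2))
      = ∫ p : ℝ × ℝ, (if |p.2| ≤ |p.1| then 0 else (p.1 - a * p.2) ^ 2) * g2 σ ρ p := by
    intro a
    exact transfer (fun p : ℝ × ℝ => if |p.2| ≤ |p.1| then 0 else (p.1 - a * p.2) ^ 2) (hmeasq2 a)
  have hKΩ : (∫ ω', (if |X₂ ω'| ≤ |X₁ ω'| then (X₁ ω') ^ 2 else 0)) = K := by
    rw [hKdef]
    exact transfer (fun p : ℝ × ℝ => if |p.2| ≤ |p.1| then p.1 ^ 2 else 0)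
      (Measurable.ite hSmeas (measurable_fst.pow_const 2) measurable_const)
  have hJ : ∀ a : ℝ, (∫ ω, (if |X₂ ω| ≤ |X₁ ω| then (X₂ ω - a * X₁ ω) ^ 2 else 0)) +
      (∫ ω, (if |X₂ ω| ≤ |X₁ ω| then 0 else (X₁ ω - a * X₂ ω) ^ 2))
      = (2 * K) * a ^ 2 + (-(2 * (ρ * σ ^ 2))) * a + (c1 + c2) := by
    intro a
    rw [he1 a, he2 a, hJ1 a, hJ2 a, hK2K]
    have e3 : a * (B1 + B2) = a * (ρ * σ ^ 2) := by rw [hB]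
    nlinarith [e3]
  refine ⟨?_, ?_, ?_⟩
  · have hfun : (fun a : ℝ =>
        (∫ ω, (if |X₂ ω| ≤ |X₁ ω| then (X₂ ω - a * X₁ ω) ^ 2 else 0)) +
        (∫ ω, (if |X₂ ω| ≤ |X₁ ω| then 0 else (X₁ ω - a * X₂ ω) ^ 2)))
        = fun a : ℝ => (2 * K) * a ^ 2 + (-(2 * (ρ * σ ^ 2))) * a + (c1 + c2) :=
      funext fun a => hJ a
    rw [hfun]
    exact quad_strictConvexOn h2K
  · intro a
    rw [hJ a, hJ _, hKΩ]
    set t := ρ * σ ^ 2 / (2 * K) with htdef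
    have hKt : (2 * K) * t = ρ * σ ^ 2 := by
      rw [htdef]; rw [mul_div_assoc']; exact mul_div_cancel_left₀ _ h2K.ne'
    have e1 : 2 * K * t * t = ρ * σ ^ 2 * t := by rw [hKt]
    have e2 : 2 * K * t * a = ρ * σ ^ 2 * a := by rw [hKt]
    nlinarith [e1, e2, mul_nonneg h2K.le (sq_nonneg (a - t))]
  · rw [hKΩ, div_lt_one h2K]
    nlinarith [hσ2, hKbig, hK2K, hρ1]
end
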